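/- arXiv:2511.04585 — 5 statements merged into one kernel-verified Lean document; each statement's English description precedes it below -/
import Mathlib

section
/- Every positive integer n can be written as a sum of distinct 3-smooth integers (integers of the form 2^x·3^y) such that no summand divides another. Moreover, if n is even, all summands can be taken to be even. -/
/-!
Strong induction on `n`. An even `n = 2m` doubles a representation of `m`: doubling preserves
3-smoothness and non-divisibility. An odd `n` is written as `3^k + 2m` with `3^k` the largest
power of three not exceeding `n`, so `2m < 2·3^k`; the doubled representation of `m` consists of
even numbers below `2·3^k`, none of which divides or is divided by the odd `3^k`.
-/

def IsThreeSmooth (b : ℕ) : Prop := ∃ x y : ℕ, b = 2 ^ x * 3 ^ y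

theorem IsThreeSmooth.pos {b : ℕ} (hb : IsThreeSmooth b) : 0 < b := by
  obtain ⟨x, y, rfl⟩ := hb
  positivity

theorem IsThreeSmooth.two_mul {b : ℕ} (hb : IsThreeSmooth b) : IsThreeSmooth (2 * b) := by
  obtain ⟨x, y, rfl⟩ := hb
  exact ⟨x + 1, y, by ring⟩

theorem isThreeSmooth_three_pow (k : ℕ) : IsThreeSmooth (3 ^ k) := ⟨0, k, by ring⟩

structure IsPrimitiveSmoothRep (B : Finset ℕ) (n : ℕ) : Prop where
  smooth : ∀ b ∈ B, IsThreeSmooth b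
  sum_eq : ∑ b ∈ B, b = n
  antichain : IsAntichain (· ∣ ·) (B : Set ℕ)

namespace IsPrimitiveSmoothRep

theorem empty : IsPrimitiveSmoothRep ∅ 0 :=
  ⟨by simp, by simp, by simp⟩

theorem le_of_mem {B : Finset ℕ} {n b : ℕ} (h : IsPrimitiveSmoothRep B n) (hb : b ∈ B) :
    b ≤ n :=
  h.sum_eq ▸ Finset.single_le_sum (f := id) (fun _ _ => Nat.zero_le _) hb

theorem image_two_mul {B : Finset ℕ} {m : ℕ} (h : IsPrimitiveSmoothRep B m) :
    IsPrimitiveSmoothRep (B.image (2 * ·)) (2 * m) where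
  smooth := by
    simp only [Finset.mem_image, forall_exists_index, and_imp, forall_apply_eq_imp_iff₂]
    exact fun b hb => (h.smooth b hb).two_mul
  sum_eq := by
    rw [Finset.sum_image fun _ _ _ _ => Nat.eq_of_mul_eq_mul_left two_pos, ← Finset.mul_sum,
      h.sum_eq]
  antichain := by
    rw [Finset.coe_image]
    exact h.antichain.image _ fun _ _ => Nat.dvd_of_mul_dvd_mul_left two_pos

theorem even_of_mem_image_two_mul {B : Finset ℕ} {b : ℕ} (hb : b ∈ B.image (2 * ·)) : Even b := by
  obtain ⟨a, -, rfl⟩ := Finset.mem_image.mp hb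
  exact even_two_mul a

end IsPrimitiveSmoothRep

theorem Nat.not_dvd_of_odd_of_even_of_lt {a b : ℕ} (ha : Odd a) (hb : Even b) (hb0 : 0 < b)
    (hba : b < 2 * a) : ¬ a ∣ b := by
  rintro ⟨c, rfl⟩
  obtain _ | _ | c := c
  · omega
  · exact (Nat.not_even_iff_odd.mpr ha) (by simpa using hb)
  · nlinarith

theorem Nat.not_dvd_of_even_of_odd {a b : ℕ} (ha : Odd a) (hb : Even b) : ¬ b ∣ a :=
  fun hba => Nat.not_even_iff_odd.mpr ha (hb.two_dvd.trans hba |> even_iff_two_dvd.mpr)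

theorem IsPrimitiveSmoothRep.insert_odd {B : Finset ℕ} {a n : ℕ} (h : IsPrimitiveSmoothRep B n)
    (hB : ∀ b ∈ B, Even b) (ha : IsThreeSmooth a) (hodd : Odd a) (hn : n < 2 * a) :
    IsPrimitiveSmoothRep (insert a B) (a + n) where
  smooth := Finset.forall_mem_insert _ _ _ |>.mpr ⟨ha, h.smooth⟩
  sum_eq := by
    have ha_notMem : a ∉ B := fun haB => Nat.not_even_iff_odd.mpr hodd (hB a haB)
    rw [Finset.sum_insert ha_notMem, h.sum_eq]
  antichain := by
    rw [Finset.coe_insert]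
    refine h.antichain.insert (fun b hb _ => Nat.not_dvd_of_even_of_odd hodd (hB b hb))
      fun b hb _ => ?_
    exact Nat.not_dvd_of_odd_of_even_of_lt hodd (hB b hb) (h.smooth b hb).pos
      ((h.le_of_mem hb).trans_lt hn)

theorem Nat.exists_eq_three_pow_add_two_mul_of_odd {n : ℕ} (hn : Odd n) :
    ∃ k m : ℕ, n = 3 ^ k + 2 * m ∧ m < 3 ^ k := by
  have hle : 3 ^ Nat.log 3 n ≤ n := Nat.pow_log_le_self 3 hn.pos.ne'
  have hlt : n < 3 ^ (Nat.log 3 n + 1) := Nat.lt_pow_succ_log_self (by norm_num) n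
  obtain ⟨m, hm⟩ := Nat.Odd.sub_odd hn (Odd.pow (n := Nat.log 3 n) (by decide : Odd 3))
  exact ⟨Nat.log 3 n, m, by omega, by rw [pow_succ] at hlt; omega⟩

theorem exists_isPrimitiveSmoothRep (n : ℕ) :
    ∃ B, IsPrimitiveSmoothRep B n ∧ (Even n → ∀ b ∈ B, Even b) := by
  induction n using Nat.strong_induction_on with
  | _ n ih =>
  rcases Nat.eq_zero_or_pos n with rfl | hpos
  · exact ⟨∅, IsPrimitiveSmoothRep.empty, by simp⟩
  rcases Nat.even_or_odd n with ⟨m, rfl⟩ | hodd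
  · obtain ⟨B, hB, -⟩ := ih m (by omega)
    refine ⟨B.image (2 * ·), ?_, fun _ _ => IsPrimitiveSmoothRep.even_of_mem_image_two_mul⟩
    simpa [two_mul] using hB.image_two_mul
  · obtain ⟨k, m, rfl, hm⟩ := Nat.exists_eq_three_pow_add_two_mul_of_odd hodd
    obtain ⟨B, hB, -⟩ := ih m (by omega)
    refine ⟨_, hB.image_two_mul.insert_odd
      (fun _ => IsPrimitiveSmoothRep.even_of_mem_image_two_mul) (isThreeSmooth_three_pow k)
      (Odd.pow (by decide)) (by omega), fun heven => absurd heven (Nat.not_even_iff_odd.mpr hodd)⟩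

theorem smooth3_no_divide (n : ℕ) (hn : 0 < n) :
    ∃ B : Finset ℕ, B.Nonempty ∧
      (∀ b ∈ B, ∃ x y : ℕ, b = 2 ^ x * 3 ^ y) ∧
      (∑ b ∈ B, b) = n ∧
      (∀ a ∈ B, ∀ b ∈ B, a ≠ b → ¬ a ∣ b) ∧
      (Even n → ∀ b ∈ B, Even b) := by
  obtain ⟨B, hB, heven⟩ := exists_isPrimitiveSmoothRep n
  exact ⟨B, Finset.nonempty_of_sum_ne_zero (hB.sum_eq ▸ hn.ne'), hB.smooth, hB.sum_eq,
    fun a ha b hb hab => hB.antichain ha hb hab, heven⟩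
end

section
/- Every positive integer n can be written as a sum n = b₁ + b₂ + ... + b_r of distinct 3-smooth integers with b₁ < b₂ < ... < b_r < 6·b₁. -/
/-!
Call `n` a window sum for `t` if it is a sum of distinct 3-smooth numbers from `[t, 6t)`. The
3-smooth numbers in `[2t, 12t)` are the doubles of those in `[t, 6t)` together with one or two
powers of 3, so an interval `[L, S - L]` of window sums for `t` yields an interval
`[2L + q, S' - (2L + q)]` of window sums for `2t`, where `q` is the least power of 3 that is at
least `2t` and `S' = 2S + q`, or `2S + 4q` when `3q < 12t`. Starting from the windows `[c, 6c)`,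
`c = 1, 3, 9`, whose window sums are found by enumeration, this gives three ladders of intervals
for `t = c * 2 ^ a`. Their end points have closed forms, and the intervals for
`t = 8, 9, 12, 18, 16` times `2 ^ x` overlap in a chain covering the whole range between the
lower ends for `8 * 2 ^ x` and `16 * 2 ^ x`.
-/

open Finset

namespace ThreeSmooth

def IsThreeSmooth (b : ℕ) : Prop := ∃ x y : ℕ, b = 2 ^ x * 3 ^ y

lemma IsThreeSmooth.two_mul {b : ℕ} (h : IsThreeSmooth b) : IsThreeSmooth (2 * b) := by
  obtain ⟨x, y, rfl⟩ := h
  exact ⟨x + 1, y, by ring⟩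

lemma isThreeSmooth_three_pow (j : ℕ) : IsThreeSmooth (3 ^ j) := ⟨0, j, by ring⟩

def IsWindowSum (t n : ℕ) : Prop :=
  ∃ B : Finset ℕ, (∀ b ∈ B, IsThreeSmooth b ∧ t ≤ b ∧ b < 6 * t) ∧ ∑ b ∈ B, b = n

lemma IsWindowSum.double_add {t m : ℕ} (h : IsWindowSum t m) {O : Finset ℕ}
    (hO : ∀ x ∈ O, Odd x ∧ IsThreeSmooth x ∧ 2 * t ≤ x ∧ x < 6 * (2 * t)) :
    IsWindowSum (2 * t) (2 * m + ∑ x ∈ O, x) := by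
  obtain ⟨B, hB, rfl⟩ := h
  have hdisj : Disjoint O (B.image (2 * ·)) := by
    refine disjoint_left.2 fun x hxO hxB => ?_
    obtain ⟨b, -, rfl⟩ := mem_image.1 hxB
    exact Nat.not_even_iff_odd.2 (hO _ hxO).1 (even_two_mul b)
  refine ⟨O ∪ B.image (2 * ·), fun x hx => ?_, ?_⟩
  · rcases mem_union.1 hx with hx | hx
    · exact (hO x hx).2
    · obtain ⟨b, hb, rfl⟩ := mem_image.1 hx
      obtain ⟨hsmooth, hb₁, hb₂⟩ := hB b hb
      exact ⟨hsmooth.two_mul, by omega, by omega⟩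
  · rw [sum_union hdisj, sum_image fun _ _ _ _ h => by simpa using h, ← mul_sum, add_comm]

/-- The odd 3-smooth numbers in `[2t, 12t)` are powers of 3; if `q` is the least of them, the
others are `3q` when `q < 4t`, and none otherwise. So a number in the next interval is `2m`,
`2m + q`, `2m + 3q` or `2m + 4q` with `m` in the interval for `t`. -/
lemma isWindowSum_two_mul_of_interval {t q L S : ℕ} (j : ℕ) (hq : q = 3 ^ j)
    (hq₁ : 2 * t ≤ q) (hq₂ : q < 6 * t) (hLS : 2 * L + 2 * q ≤ S)
    (h : ∀ m, L ≤ m → m + L ≤ S → IsWindowSum t m) (n : ℕ) (hn₁ : 2 * L + q ≤ n)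
    (hn₂ : n + (2 * L + q) ≤ 2 * S + q + if q < 4 * t then 3 * q else 0) :
    IsWindowSum (2 * t) n := by
  have hodd : Odd q := hq ▸ Odd.pow (by decide)
  have hq_mod : q % 2 = 1 := Nat.odd_iff.1 hodd
  have key : ∀ O : Finset ℕ, O ⊆ {q, 3 * q} → (3 * q ∈ O → q < 4 * t) →
      ∀ m, L ≤ m → m + L ≤ S → 2 * m + ∑ x ∈ O, x = n → IsWindowSum (2 * t) n := by
    rintro O hO h3 m hm₁ hm₂ rfl
    refine (h m hm₁ hm₂).double_add fun x hx => ?_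
    rcases mem_insert.1 (hO hx) with rfl | hx'
    · exact ⟨hodd, hq ▸ isThreeSmooth_three_pow j, hq₁, by omega⟩
    · rw [mem_singleton.1 hx'] at hx ⊢
      have := h3 hx
      exact ⟨Odd.mul (by decide) hodd, hq ▸ ⟨0, j + 1, by ring⟩, by omega, by omega⟩
  have hq₄ : ∀ m, ¬m + L ≤ S → 2 * m ≤ n → q < 4 * t := fun m hm hmn => by
    by_contra h4
    rw [if_neg h4] at hn₂
    omega
  rcases Nat.mod_two_eq_zero_or_one n with hn | hn
  · by_cases hm : n / 2 + L ≤ S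
    · exact key ∅ (empty_subset _) (by simp) (n / 2) (by omega) hm (by simp; omega)
    · have h4 := hq₄ (n / 2) hm (by omega)
      rw [if_pos h4] at hn₂
      exact key {q, 3 * q} subset_rfl (fun _ => h4) (n / 2 - 2 * q) (by omega) (by omega)
        (by rw [sum_pair (by omega)]; omega)
  · by_cases hm : (n - q) / 2 + L ≤ S
    · exact key {q} (by simp) (fun h => by simp at h; omega) ((n - q) / 2) (by omega) hm
        (by simp; omega)
    · have h4 := hq₄ ((n - q) / 2) hm (by omega)
      rw [if_pos h4] at hn₂
      exact key {3 * q} (by simp) (fun _ => h4) ((n - 3 * q) / 2) (by omega) (by omega)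
        (by simp; omega)

/-- The least power of 3 that is at least `2 ^ a`. -/
def pow3Ceil : ℕ → ℕ
  | 0 => 1
  | a + 1 => if pow3Ceil a < 2 ^ (a + 1) then 3 * pow3Ceil a else pow3Ceil a

lemma exists_pow3Ceil_eq (a : ℕ) : ∃ j, pow3Ceil a = 3 ^ j := by
  induction a with
  | zero => exact ⟨0, rfl⟩
  | succ a ih =>
    obtain ⟨j, hj⟩ := ih
    rw [pow3Ceil, hj]
    split_ifs
    exacts [⟨j + 1, by ring⟩, ⟨j, rfl⟩]

lemma pow3Ceil_bounds (a : ℕ) : 2 ^ a ≤ pow3Ceil a ∧ pow3Ceil a < 3 * 2 ^ a := by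
  induction a with
  | zero => simp [pow3Ceil]
  | succ a ih =>
    rw [pow3Ceil, pow_succ]
    split_ifs <;> omega

/- Along the ladder starting from `t = c` (a power of 3) with interval `[L₀, S₀ - L₀]`, the
`a`-th doubling adds `q = c * pow3Ceil a` to the lower end `L ↦ 2L + q` and `q` or `4q` to the
total `S ↦ 2S + q (+ 3q)`; `lowerEnd` and `upperSum` are the resulting closed forms. -/
def oddSum : ℕ → ℕ
  | 0 => 0
  | a + 1 => 2 * oddSum a + pow3Ceil (a + 1)

def extraSum : ℕ → ℕ
  | 0 => 0
  | a + 1 => 2 * extraSum a + if pow3Ceil (a + 1) < 2 ^ (a + 2) then pow3Ceil (a + 1) else 0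

lemma oddSum_succ (a : ℕ) : oddSum (a + 1) = 2 * oddSum a + pow3Ceil (a + 1) := rfl

lemma oddSum_add_pow3Ceil_le (a : ℕ) :
    oddSum a + pow3Ceil (a + 1) ≤ 2 * extraSum a + 3 * 2 ^ a := by
  induction a with
  | zero => simp [oddSum, extraSum, pow3Ceil]
  | succ a ih =>
    have h := pow3Ceil_bounds (a + 1)
    rw [oddSum, extraSum, pow3Ceil.eq_2 (a + 1), pow_succ 2 (a + 1)]
    rw [pow_succ] at h
    split_ifs <;> omega

def lowerEnd (c L₀ a : ℕ) : ℕ := L₀ * 2 ^ a + c * oddSum a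

def upperSum (c S₀ a : ℕ) : ℕ := S₀ * 2 ^ a + c * (oddSum a + 3 * extraSum a)

lemma lowerEnd_succ (c L₀ a : ℕ) :
    lowerEnd c L₀ (a + 1) = 2 * lowerEnd c L₀ a + c * pow3Ceil (a + 1) := by
  rw [lowerEnd, lowerEnd, oddSum_succ]
  ring

lemma upperSum_succ (c S₀ a : ℕ) :
    upperSum c S₀ (a + 1) = 2 * upperSum c S₀ a + c * pow3Ceil (a + 1) +
      if pow3Ceil (a + 1) < 2 ^ (a + 2) then 3 * (c * pow3Ceil (a + 1)) else 0 := by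
  rw [upperSum, upperSum, oddSum_succ, extraSum]
  split_ifs <;> ring

lemma two_mul_lowerEnd_add_le {c L₀ S₀ : ℕ} (h : 2 * L₀ + 6 * c ≤ S₀) (a : ℕ) :
    2 * lowerEnd c L₀ a + 2 * (c * pow3Ceil (a + 1)) ≤ upperSum c S₀ a := by
  induction a with
  | zero =>
    change 2 * (L₀ * 1 + c * 0) + 2 * (c * 3) ≤ S₀ * 1 + c * (0 + 3 * 0)
    omega
  | succ a ih =>
    have hp : pow3Ceil (a + 2) =
        if pow3Ceil (a + 1) < 2 ^ (a + 2) then 3 * pow3Ceil (a + 1) else pow3Ceil (a + 1) := rfl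
    rw [lowerEnd_succ, upperSum_succ, hp]
    split_ifs <;> linarith [Nat.zero_le (c * pow3Ceil (a + 1))]

theorem isWindowSum_ladder {c L₀ S₀ : ℕ} (j : ℕ) (hc : c = 3 ^ j)
    (h : 2 * L₀ + 6 * c ≤ S₀) (hbase : ∀ n, L₀ ≤ n → n + L₀ ≤ S₀ → IsWindowSum c n) :
    ∀ a n, lowerEnd c L₀ a ≤ n → n + lowerEnd c L₀ a ≤ upperSum c S₀ a →
      IsWindowSum (c * 2 ^ a) n := by
  intro a
  induction a with
  | zero => simpa [lowerEnd, upperSum, oddSum, extraSum] using hbase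
  | succ a ih =>
    obtain ⟨k, hk⟩ := exists_pow3Ceil_eq (a + 1)
    obtain ⟨hp₁, hp₂⟩ := pow3Ceil_bounds (a + 1)
    have hc₀ : 0 < c := hc ▸ pow_pos (by norm_num) j
    have hiff : c * pow3Ceil (a + 1) < 4 * (c * 2 ^ a) ↔ pow3Ceil (a + 1) < 2 ^ (a + 2) := by
      rw [pow_succ, pow_succ, show 4 * (c * 2 ^ a) = c * (2 ^ a * 2 * 2) by ring]
      exact Nat.mul_lt_mul_left hc₀
    intro n hn₁ hn₂
    rw [lowerEnd_succ] at hn₁ hn₂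
    rw [upperSum_succ] at hn₂
    simp only [← hiff] at hn₂
    rw [show c * 2 ^ (a + 1) = 2 * (c * 2 ^ a) by ring]
    refine isWindowSum_two_mul_of_interval (j + k) (by rw [hc, hk, pow_add]) ?_ ?_
      (two_mul_lowerEnd_add_le h a) ih n hn₁ hn₂
    · calc 2 * (c * 2 ^ a) = c * 2 ^ (a + 1) := by ring
        _ ≤ c * pow3Ceil (a + 1) := Nat.mul_le_mul_left c hp₁
    · calc c * pow3Ceil (a + 1) < c * (3 * 2 ^ (a + 1)) := Nat.mul_lt_mul_of_pos_left hp₂ hc₀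
        _ = 6 * (c * 2 ^ a) := by ring

def smoothWindow (t k : ℕ) : Finset ℕ :=
  ((range k ×ˢ range k).image fun p => 2 ^ p.1 * 3 ^ p.2).filter fun b => t ≤ b ∧ b < 6 * t

lemma isWindowSum_of_Icc_subset {t k L₀ S₀ : ℕ}
    (h : Icc L₀ (S₀ - L₀) ⊆ (smoothWindow t k).powerset.image fun B => ∑ b ∈ B, b) :
    ∀ n, L₀ ≤ n → n + L₀ ≤ S₀ → IsWindowSum t n := by
  intro n hn₁ hn₂
  obtain ⟨B, hB, rfl⟩ := mem_image.1 (h (mem_Icc.2 ⟨hn₁, by omega⟩))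
  refine ⟨B, fun b hb => ?_, rfl⟩
  obtain ⟨hb, hbt⟩ := mem_filter.1 (mem_powerset.1 hB hb)
  obtain ⟨⟨x, y⟩, -, rfl⟩ := mem_image.1 hb
  exact ⟨⟨x, y, rfl⟩, hbt⟩

lemma isWindowSum_ladder_one :
    ∀ a n, lowerEnd 1 1 a ≤ n → n + lowerEnd 1 1 a ≤ upperSum 1 10 a →
      IsWindowSum (1 * 2 ^ a) n :=
  isWindowSum_ladder 0 rfl (by norm_num)
    (isWindowSum_of_Icc_subset (k := 6) (by decide +kernel))

lemma isWindowSum_ladder_three :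
    ∀ a n, lowerEnd 3 6 a ≤ n → n + lowerEnd 3 6 a ≤ upperSum 3 58 a →
      IsWindowSum (3 * 2 ^ a) n :=
  isWindowSum_ladder 1 rfl (by norm_num)
    (isWindowSum_of_Icc_subset (k := 6) (by decide +kernel))

lemma isWindowSum_ladder_nine :
    ∀ a n, lowerEnd 9 48 a ≤ n → n + lowerEnd 9 48 a ≤ upperSum 9 222 a →
      IsWindowSum (9 * 2 ^ a) n :=
  isWindowSum_ladder 2 rfl (by norm_num)
    (isWindowSum_of_Icc_subset (k := 6) (by decide +kernel))

/- The ladder intervals `[lowerEnd, upperSum - lowerEnd]` for `t = 8, 9, 12, 18, 16` times `2 ^ x`: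
each begins at most one past the end of the previous one. -/
section Overlaps

variable (x : ℕ)

lemma ladder_one_meets_nine :
    lowerEnd 9 48 x + lowerEnd 1 1 (x + 3) ≤ upperSum 1 10 (x + 3) + 1 := by
  have hinv : oddSum (x + 3) + pow3Ceil (x + 4) ≤ 2 * extraSum (x + 3) + 3 * 2 ^ (x + 3) :=
    oddSum_add_pow3Ceil_le (x + 3)
  have e₁ : oddSum (x + 1) = 2 * oddSum x + pow3Ceil (x + 1) := oddSum_succ _
  have e₂ : oddSum (x + 2) = 2 * oddSum (x + 1) + pow3Ceil (x + 2) := oddSum_succ _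
  have e₃ : oddSum (x + 3) = 2 * oddSum (x + 2) + pow3Ceil (x + 3) := oddSum_succ _
  have b₁ := pow3Ceil_bounds (x + 1)
  have b₂ := pow3Ceil_bounds (x + 2)
  have b₃ := pow3Ceil_bounds (x + 3)
  have b₄ := pow3Ceil_bounds (x + 4)
  unfold lowerEnd upperSum
  simp only [pow_succ] at *
  omega

lemma ladder_nine_meets_three :
    lowerEnd 3 6 (x + 2) + lowerEnd 9 48 x ≤ upperSum 9 222 x + 1 := by
  have hinv := oddSum_add_pow3Ceil_le x
  have e₁ : oddSum (x + 1) = 2 * oddSum x + pow3Ceil (x + 1) := oddSum_succ _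
  have e₂ : oddSum (x + 2) = 2 * oddSum (x + 1) + pow3Ceil (x + 2) := oddSum_succ _
  have b₁ := pow3Ceil_bounds (x + 1)
  have b₂ := pow3Ceil_bounds (x + 2)
  unfold lowerEnd upperSum
  simp only [pow_succ] at *
  omega

lemma ladder_three_meets_nine :
    lowerEnd 9 48 (x + 1) + lowerEnd 3 6 (x + 2) ≤ upperSum 3 58 (x + 2) + 1 := by
  have hinv : oddSum (x + 2) + pow3Ceil (x + 3) ≤ 2 * extraSum (x + 2) + 3 * 2 ^ (x + 2) :=
    oddSum_add_pow3Ceil_le (x + 2)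
  have e₁ : oddSum (x + 1) = 2 * oddSum x + pow3Ceil (x + 1) := oddSum_succ _
  have e₂ : oddSum (x + 2) = 2 * oddSum (x + 1) + pow3Ceil (x + 2) := oddSum_succ _
  have b₁ := pow3Ceil_bounds (x + 1)
  have b₂ := pow3Ceil_bounds (x + 2)
  have b₃ := pow3Ceil_bounds (x + 3)
  unfold lowerEnd upperSum
  simp only [pow_succ] at *
  omega

lemma ladder_nine_meets_one :
    lowerEnd 1 1 (x + 4) + lowerEnd 9 48 (x + 1) ≤ upperSum 9 222 (x + 1) + 1 := by
  have hinv : oddSum (x + 1) + pow3Ceil (x + 2) ≤ 2 * extraSum (x + 1) + 3 * 2 ^ (x + 1) :=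
    oddSum_add_pow3Ceil_le (x + 1)
  have e₁ : oddSum (x + 1) = 2 * oddSum x + pow3Ceil (x + 1) := oddSum_succ _
  have e₂ : oddSum (x + 2) = 2 * oddSum (x + 1) + pow3Ceil (x + 2) := oddSum_succ _
  have e₃ : oddSum (x + 3) = 2 * oddSum (x + 2) + pow3Ceil (x + 3) := oddSum_succ _
  have e₄ : oddSum (x + 4) = 2 * oddSum (x + 3) + pow3Ceil (x + 4) := oddSum_succ _
  have b₁ := pow3Ceil_bounds (x + 1)
  have b₂ := pow3Ceil_bounds (x + 2)
  have b₃ := pow3Ceil_bounds (x + 3)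
  have b₄ := pow3Ceil_bounds (x + 4)
  unfold lowerEnd upperSum
  simp only [pow_succ] at *
  omega

end Overlaps

lemma exists_isWindowSum_between_lowerEnd {y n : ℕ} (h₁ : lowerEnd 1 1 y ≤ n)
    (h₂ : n ≤ lowerEnd 1 1 (y + 1)) : ∃ t, IsWindowSum t n := by
  rcases Nat.lt_or_ge y 3 with hy | hy
  · have : lowerEnd 1 1 (y + 1) + lowerEnd 1 1 y ≤ upperSum 1 10 y := by
      interval_cases y <;> decide
    exact ⟨_, isWindowSum_ladder_one y n h₁ (by omega)⟩
  obtain ⟨x, rfl⟩ := Nat.exists_eq_add_of_le' hy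
  replace h₂ : n ≤ lowerEnd 1 1 (x + 4) := h₂
  by_cases c₁ : n + lowerEnd 1 1 (x + 3) ≤ upperSum 1 10 (x + 3)
  · exact ⟨_, isWindowSum_ladder_one (x + 3) n h₁ c₁⟩
  have o₁ := ladder_one_meets_nine x
  by_cases c₂ : n + lowerEnd 9 48 x ≤ upperSum 9 222 x
  · exact ⟨_, isWindowSum_ladder_nine x n (by omega) c₂⟩
  have o₂ := ladder_nine_meets_three x
  by_cases c₃ : n + lowerEnd 3 6 (x + 2) ≤ upperSum 3 58 (x + 2)
  · exact ⟨_, isWindowSum_ladder_three (x + 2) n (by omega) c₃⟩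
  have o₃ := ladder_three_meets_nine x
  by_cases c₄ : n + lowerEnd 9 48 (x + 1) ≤ upperSum 9 222 (x + 1)
  · exact ⟨_, isWindowSum_ladder_nine (x + 1) n (by omega) c₄⟩
  have o₄ := ladder_nine_meets_one x
  have h₅ := two_mul_lowerEnd_add_le (c := 1) (L₀ := 1) (S₀ := 10) (by norm_num) (x + 4)
  exact ⟨_, isWindowSum_ladder_one (x + 4) n (by omega) (by omega)⟩

lemma exists_isWindowSum {n : ℕ} (hn : 0 < n) : ∃ t, IsWindowSum t n := by
  suffices h : ∀ y n, 0 < n → n ≤ lowerEnd 1 1 y → ∃ t, IsWindowSum t n from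
    h n n hn (by have := Nat.lt_two_pow_self (n := n); unfold lowerEnd; omega)
  intro y
  induction y with
  | zero =>
    intro n hn h
    have h₀ : lowerEnd 1 1 0 = 1 := rfl
    exact exists_isWindowSum_between_lowerEnd (y := 0) (by omega) (h.trans (by decide))
  | succ y ih =>
    intro n hn h
    by_cases hy : n ≤ lowerEnd 1 1 y
    · exact ih n hn hy
    · exact exists_isWindowSum_between_lowerEnd (by omega) h

end ThreeSmooth

theorem smooth3_small_spacing (n : ℕ) (hn : 0 < n) :
    ∃ B : Finset ℕ, ∃ hB : B.Nonempty,
      (∀ b ∈ B, ∃ x y : ℕ, b = 2 ^ x * 3 ^ y) ∧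
      (∑ b ∈ B, b) = n ∧
      (∀ b ∈ B, b < 6 * B.min' hB) := by
  obtain ⟨t, B, hB, rfl⟩ := ThreeSmooth.exists_isWindowSum hn
  have hne : B.Nonempty := Finset.nonempty_of_sum_ne_zero hn.ne'
  refine ⟨B, hne, fun b hb => (hB b hb).1, rfl, fun b hb => ?_⟩
  have ht : t ≤ B.min' hne := Finset.le_min' B hne t fun b hb => (hB b hb).2.1
  have := (hB b hb).2.2
  omega
end

section
/- For every odd integer p > 1, there exists a constant C (depending on p) such that every positive integer n can be written as a sum n = b₁ + ... + b_r of distinct elements of A_p with b₁ < b₂ < ... < b_r < C·b₁. -/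
/-!
Let `L Y = threshold p Y = 2 (Y + 1) p ^ (Y + 1)`. By induction on `Y`, every
`n ∈ [L Y, L (Y + 1)]` is a sum of distinct elements of `A_p` lying in `[p ^ Y, 4 p ^ (Y + 2)]`.
For the step choose a power of two `E ∈ (p ^ (Y + 1), 2 p ^ (Y + 1)]`. As `E` is invertible
mod `p`, we can write `n = p m + c E` with `m ∈ [L Y, L (Y + 1)]` as large as possible, which keeps
`c E ≤ 2 p ^ (Y + 3) + 2 p ^ (Y + 2)`. Then `p` times a representation of `m`, together with `E`
times the binary digits of `c`, represents `n`: the first part consists of multiples of `p`, the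
second of powers of two, so they are disjoint. The intervals `[L Y, L (Y + 1)]` cover all
`n ≥ 2 p`, and smaller `n` are written in binary. In both cases all summands lie in a window
`[t, 4 p ^ 2 t]`.
-/

open Finset

def IsSumOfDistinct (S : Set ℕ) (n : ℕ) : Prop :=
  ∃ B : Finset ℕ, ↑B ⊆ S ∧ ∑ b ∈ B, b = n

namespace IsSumOfDistinct

variable {S T : Set ℕ} {m n : ℕ}

theorem mono (h : IsSumOfDistinct S n) (hST : S ⊆ T) : IsSumOfDistinct T n :=
  let ⟨B, hB, hsum⟩ := h
  ⟨B, hB.trans hST, hsum⟩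

theorem mul {k : ℕ} (h : IsSumOfDistinct S n) (hk : k ≠ 0) (hST : ∀ b ∈ S, k * b ∈ T) :
    IsSumOfDistinct T (k * n) := by
  obtain ⟨B, hB, rfl⟩ := h
  refine ⟨B.image (k * ·), ?_, ?_⟩
  · simpa [Set.subset_def] using fun b hb ↦ hST b (hB hb)
  · rw [sum_image fun a _ b _ h ↦ Nat.eq_of_mul_eq_mul_left (Nat.pos_of_ne_zero hk) h, mul_sum]

theorem add (hm : IsSumOfDistinct S m) (hn : IsSumOfDistinct T n) (hST : Disjoint S T) :
    IsSumOfDistinct (S ∪ T) (m + n) := by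
  obtain ⟨B, hB, rfl⟩ := hm
  obtain ⟨B', hB', rfl⟩ := hn
  refine ⟨B ∪ B', by simpa using Set.union_subset_union hB hB', ?_⟩
  rw [sum_union (disjoint_coe.mp (hST.mono hB hB'))]

end IsSumOfDistinct

theorem isSumOfDistinct_two_pow (n : ℕ) :
    IsSumOfDistinct (Set.range (2 ^ ·) ∩ Set.Iic n) n := by
  refine ⟨n.bitIndices.toFinset.image (2 ^ ·), ?_, ?_⟩
  · simpa [Set.subset_def] using fun i hi ↦ Nat.two_pow_le_of_mem_bitIndices hi
  · rw [sum_image fun a _ b _ h ↦ Nat.pow_right_injective le_rfl h,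
      sum_toFinset_bitIndices_two_pow]

theorem exists_le_and_lt_succ {f : ℕ → ℕ} (hf : ∀ N, ∃ Y, N < f Y) {n : ℕ} (hn : f 0 ≤ n) :
    ∃ Y, f Y ≤ n ∧ n < f (Y + 1) := by
  classical
  obtain ⟨Y, hY⟩ : ∃ Y, Nat.find (hf n) = Y + 1 :=
    Nat.exists_eq_succ_of_ne_zero fun h ↦ by simpa [h, hn.not_gt] using Nat.find_spec (hf n)
  exact ⟨Y, not_lt.mp (Nat.find_min (hf n) (by omega)), hY ▸ Nat.find_spec (hf n)⟩

theorem exists_modEq_mul_of_coprime {p E : ℕ} (hp : 0 < p) (hE : E.Coprime p) (a n : ℕ) :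
    ∃ c, a ≤ c ∧ c < a + p ∧ c * E ≡ n [MOD p] := by
  have : NeZero p := ⟨hp.ne'⟩
  set δ := (((n : ZMod p) - a * E) * (E : ZMod p)⁻¹).val
  refine ⟨a + δ, le_add_right le_rfl, by simpa using ZMod.val_lt _, ?_⟩
  rw [← ZMod.natCast_eq_natCast_iff]
  push_cast [δ, ZMod.natCast_val, ZMod.cast_id]
  linear_combination ((n : ZMod p) - a * E) * ZMod.coe_mul_inv_eq_one E hE

theorem exists_eq_mul_add_mul {p E lo hi n : ℕ} (hp : 0 < p) (hE : 0 < E) (hpE : E.Coprime p)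
    (hgap : lo + E ≤ hi) (hn : p * lo + p * E ≤ n) :
    ∃ m c, n = p * m + c * E ∧ m ∈ Set.Icc lo hi ∧ c * E ≤ n - p * hi + p * E := by
  set q := (n - p * hi) / E
  obtain ⟨c, hqc, hcq, hmod⟩ := exists_modEq_mul_of_coprime hp hpE (q + 1) n
  have hlow : n - p * hi < c * E := calc
    n - p * hi < q * E + E := Nat.lt_div_mul_add hE
    _ = (q + 1) * E := by ring
    _ ≤ c * E := Nat.mul_le_mul_right E hqc
  have hup : c * E ≤ n - p * hi + p * E := calc
    c * E ≤ (q + p) * E := Nat.mul_le_mul_right E (by omega)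
    _ = q * E + p * E := by ring
    _ ≤ n - p * hi + p * E := by gcongr; exact Nat.div_mul_le_self _ _
  have hgap' : p * lo + p * E ≤ p * hi := by rw [← mul_add]; exact Nat.mul_le_mul_left p hgap
  obtain ⟨m, hm⟩ := (Nat.modEq_iff_dvd' (by omega)).mp hmod
  refine ⟨m, c, by omega, ⟨?_, ?_⟩, hup⟩
  · exact Nat.le_of_mul_le_mul_left (by omega) hp
  · exact Nat.le_of_mul_le_mul_left (by omega) hp

def Ap (p : ℕ) : Set ℕ := {b | ∃ x y : ℕ, b = 2 ^ x * p ^ y}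

def threshold (p Y : ℕ) : ℕ := 2 * (Y + 1) * p ^ (Y + 1)

theorem threshold_succ (p Y : ℕ) :
    threshold p (Y + 1) = p * threshold p Y + 2 * p ^ (Y + 2) := by
  unfold threshold; ring

theorem isSumOfDistinct_Ap_of_le {p n : ℕ} (hn : n ≤ 4 * p ^ 2) :
    IsSumOfDistinct (Ap p ∩ Set.Icc 1 (4 * p ^ 2)) n :=
  (isSumOfDistinct_two_pow n).mono fun _ ⟨⟨i, hi⟩, hbn⟩ ↦
    ⟨⟨i, 0, by simp [hi]⟩, hi ▸ Nat.one_le_two_pow, le_trans hbn hn⟩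

theorem isSumOfDistinct_Ap_of_mem_Icc {p : ℕ} (hp : Odd p) (hp1 : 1 < p) (Y : ℕ) {n : ℕ}
    (hn : n ∈ Set.Icc (threshold p Y) (threshold p (Y + 1))) :
    IsSumOfDistinct (Ap p ∩ Set.Icc (p ^ Y) (4 * p ^ (Y + 2))) n := by
  induction Y generalizing n with
  | zero => simpa using isSumOfDistinct_Ap_of_le (p := p) (by simpa [threshold] using hn.2)
  | succ Y ih =>
    obtain ⟨u, hPE, hEP⟩ : ∃ u, p ^ (Y + 1) < 2 ^ u ∧ 2 ^ u ≤ 2 * p ^ (Y + 1) :=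
      ⟨Nat.log 2 (p ^ (Y + 1)) + 1, Nat.lt_pow_succ_log_self one_lt_two _, by
        rw [pow_succ, mul_comm]
        exact Nat.mul_le_mul_left 2 (Nat.pow_log_le_self 2 (by positivity))⟩
    have hpE : p * 2 ^ u ≤ 2 * p ^ (Y + 2) := by
      rw [pow_succ', mul_left_comm]; exact Nat.mul_le_mul_left p hEP
    have hmono : p ^ (Y + 1) ≤ p ^ (Y + 2) ∧ p ^ (Y + 2) ≤ p ^ (Y + 3) :=
      ⟨Nat.pow_le_pow_right (by omega) (by omega), Nat.pow_le_pow_right (by omega) (by omega)⟩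
    have hL := threshold_succ p Y
    have hL' : threshold p (Y + 1 + 1) = p * threshold p (Y + 1) + 2 * p ^ (Y + 3) :=
      threshold_succ p (Y + 1)
    obtain ⟨hn₁, hn₂⟩ := hn
    have hLY : threshold p Y ≤ p * threshold p Y := Nat.le_mul_of_pos_left _ (by omega)
    obtain ⟨m, c, hnmc, hm, hcE⟩ := exists_eq_mul_add_mul (lo := threshold p Y)
      (hi := threshold p (Y + 1)) (n := n) (by omega) (by positivity)
      ((Nat.coprime_two_left.mpr hp).pow_left u) (by omega) (by omega)
    have hcE' : c * 2 ^ u ≤ 4 * p ^ (Y + 3) := by omega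
    set W := Ap p ∩ Set.Icc (p ^ (Y + 1)) (4 * p ^ (Y + 3))
    have hpm : IsSumOfDistinct (W ∩ {b | p ∣ b}) (p * m) := by
      refine (ih hm).mul (by omega) fun b ⟨⟨x, y, hb⟩, hlo, hhi⟩ ↦ ⟨⟨⟨x, y + 1, ?_⟩, ?_, ?_⟩, ?_⟩
      · rw [hb]; ring
      · rw [pow_succ']; exact Nat.mul_le_mul_left p hlo
      · calc p * b ≤ p * (4 * p ^ (Y + 2)) := Nat.mul_le_mul_left p hhi
          _ = 4 * p ^ (Y + 3) := by ring
      · exact dvd_mul_right p b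
    have hcE2 : IsSumOfDistinct (W ∩ {b | p ∣ b}ᶜ) (c * 2 ^ u) := by
      rw [mul_comm]
      refine (isSumOfDistinct_two_pow c).mul (by positivity) ?_
      rintro _ ⟨⟨i, rfl⟩, hic⟩
      rw [← pow_add]
      refine ⟨⟨⟨u + i, 0, by rw [pow_zero, mul_one]⟩, ?_, ?_⟩, ?_⟩
      · exact hPE.le.trans (Nat.pow_le_pow_right two_pos (by omega))
      · calc 2 ^ (u + i) = 2 ^ u * 2 ^ i := pow_add 2 u i
          _ ≤ c * 2 ^ u := by rw [mul_comm c]; exact Nat.mul_le_mul_left _ hic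
          _ ≤ 4 * p ^ (Y + 3) := hcE'
      · intro hdvd
        have := Nat.Coprime.eq_one_of_dvd ((Nat.coprime_two_right.mpr hp).pow_right _) hdvd
        omega
    rw [hnmc, ← Set.inter_union_compl W {b | p ∣ b}]
    exact hpm.add hcE2 (disjoint_compl_right.mono Set.inter_subset_right Set.inter_subset_right)

theorem exists_isSumOfDistinct_Ap {p : ℕ} (hp : Odd p) (hp1 : 1 < p) (n : ℕ) :
    ∃ t, 0 < t ∧ IsSumOfDistinct (Ap p ∩ Set.Icc t (4 * p ^ 2 * t)) n := by
  by_cases hn : n < threshold p 0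
  · refine ⟨1, one_pos, ?_⟩
    simpa using isSumOfDistinct_Ap_of_le (p := p) (n := n) (by simp [threshold] at hn; nlinarith)
  have hunbounded (N : ℕ) : N < threshold p N := by
    unfold threshold; nlinarith [Nat.one_le_pow (N + 1) p (by omega)]
  obtain ⟨Y, hY₁, hY₂⟩ := exists_le_and_lt_succ (fun N ↦ ⟨N, hunbounded N⟩) (not_lt.mp hn)
  refine ⟨p ^ Y, by positivity, ?_⟩
  have h := isSumOfDistinct_Ap_of_mem_Icc hp hp1 Y ⟨hY₁, hY₂.le⟩
  rwa [pow_add, mul_comm (p ^ Y), ← mul_assoc] at h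

theorem Ap_small_spacing (p : ℕ) (hp : Odd p) (hp1 : 1 < p) :
    ∃ C : ℝ, ∀ n : ℕ, 0 < n →
      ∃ B : Finset ℕ, ∃ hB : B.Nonempty,
        (∀ b ∈ B, ∃ x y : ℕ, b = 2 ^ x * p ^ y) ∧
        (∑ b ∈ B, b) = n ∧
        (∀ b ∈ B, (b : ℝ) < C * (B.min' hB : ℝ)) := by
  refine ⟨4 * p ^ 2 + 1, fun n hn ↦ ?_⟩
  obtain ⟨t, ht, B, hBS, hsum⟩ := exists_isSumOfDistinct_Ap hp hp1 n
  have hB : B.Nonempty := nonempty_of_sum_ne_zero (hsum ▸ hn.ne')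
  refine ⟨B, hB, fun b hb ↦ (hBS hb).1, hsum, fun b hb ↦ ?_⟩
  have hmin : t ≤ B.min' hB := (hBS (B.min'_mem hB)).2.1
  have hb : (b : ℝ) ≤ 4 * p ^ 2 * B.min' hB := by
    exact_mod_cast (hBS hb).2.2.trans (Nat.mul_le_mul_left _ hmin)
  have hpos : (0 : ℝ) < B.min' hB := by exact_mod_cast ht.trans_le hmin
  linarith
end

section
/- For every odd integer p > 1, and every constant C with 1 < C < p, there exists a positive integer n that cannot be written as a sum n = b₁ + ... + b_r of distinct elements of A_p with b₁ < ... < b_r < C·b₁. -/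
/-!
Write `α = log_p 2`, which is irrational, and `c = log_p C < 1`. The number `2^x p^y` lies in
`[t, C t)` iff `y` lies in `[log_p t - x α, log_p t - x α + c)`. This interval contains no integer
once `log_p t - x α` falls in `(m, m + 1 - c)` for an integer `m`, and by Dirichlet approximation
the irrational rotation by `-α` enters these arcs within every block of `K₀` consecutive exponents `x`,
for some `K₀` independent of `t`. So for every `m`, at least `J` of the exponents
`x < K = K₀ J` admit no `2^x p^y` in `[m, C m)`, and for each of the others there is at most one,
as `C < p`. A representation of `n < 2^K` with least part `m` is therefore a subset of a set of size
at most `K - J`, and `m` is one of at most `K²` numbers `2^x p^y` with `x, y < K`. Hence at most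
`K² 2^(K-J)` numbers below `2^K` are represented, which is less than `2^K - 1` for large `J`.
-/

open Finset Real

lemma exists_nat_add_mul_mem_Ioo {δ ℓ u a : ℝ} (hδ : 0 < δ) (hδℓ : δ < ℓ) (hua : u ≤ a) :
    ∃ i : ℕ, (i : ℝ) ≤ (a - u) / δ + 1 ∧ u + i * δ ∈ Set.Ioo a (a + ℓ) := by
  have hfloor := Nat.floor_le (div_nonneg (sub_nonneg.2 hua) hδ.le)
  have hlt := Nat.lt_floor_add_one ((a - u) / δ)
  refine ⟨⌊(a - u) / δ⌋₊ + 1, by push_cast; linarith, ?_, ?_⟩ <;>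
    rw [le_div_iff₀ hδ] at hfloor <;> rw [div_lt_iff₀ hδ] at hlt <;> push_cast <;> nlinarith

lemma exists_bound_add_mul_mem_Ioo_int_of_abs_lt {δ ℓ : ℝ} (hδ : δ ≠ 0) (hδℓ : |δ| < ℓ) :
    ∃ N : ℕ, ∀ u : ℝ, ∃ i ≤ N, ∃ m : ℤ, u + i * δ ∈ Set.Ioo (m : ℝ) (m + ℓ) := by
  refine ⟨⌊1 / |δ| + 1⌋₊, fun u => ?_⟩
  have bound : ∀ {i : ℕ} {d : ℝ}, (i : ℝ) ≤ d / |δ| + 1 → d < 1 → i ≤ ⌊1 / |δ| + 1⌋₊ :=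
    fun hi hd => Nat.le_floor (hi.trans (by gcongr))
  rcases hδ.lt_or_gt with hneg | hpos
  · obtain ⟨i, hi, hmem⟩ := exists_nat_add_mul_mem_Ioo (u := -u) (a := ⌈-u + ℓ⌉ - ℓ)
      (neg_pos.2 hneg) (by rwa [abs_of_neg hneg] at hδℓ) (by linarith [Int.le_ceil (-u + ℓ)])
    refine ⟨i, bound (by rwa [abs_of_neg hneg]) (by linarith [Int.ceil_lt_add_one (-u + ℓ)]),
      -⌈-u + ℓ⌉, ?_, ?_⟩ <;> push_cast <;> linarith [hmem.1, hmem.2]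
  · obtain ⟨i, hi, hmem⟩ := exists_nat_add_mul_mem_Ioo hpos (by rwa [abs_of_pos hpos] at hδℓ)
      (Int.le_ceil u)
    exact ⟨i, bound (by rwa [abs_of_pos hpos]) (by linarith [Int.ceil_lt_add_one u]), ⌈u⌉, hmem⟩

theorem Irrational.exists_bound_add_mul_mem_Ioo_int {α ℓ : ℝ} (hα : Irrational α)
    (hℓ : 0 < ℓ) : ∃ N : ℕ, ∀ u : ℝ, ∃ n ≤ N, ∃ m : ℤ, u + n * α ∈ Set.Ioo (m : ℝ) (m + ℓ) := by
  -- Dirichlet: `q α` is within `ℓ` of an integer without being one, so along multiples of `q`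
  -- the orbit moves mod 1 by a nonzero step `δ` shorter than `ℓ`.
  obtain ⟨n, hn⟩ := exists_nat_one_div_lt hℓ
  obtain ⟨q, hq, -, hqα⟩ := Real.exists_nat_abs_mul_sub_round_le α n.succ_pos
  set δ := q * α - round (q * α)
  have hδ : δ ≠ 0 := sub_ne_zero.2 ((hα.natCast_mul hq.ne').ne_int _)
  have hδℓ : |δ| < ℓ := hqα.trans_lt (lt_of_le_of_lt (by gcongr; linarith) hn)
  obtain ⟨N, hN⟩ := exists_bound_add_mul_mem_Ioo_int_of_abs_lt hδ hδℓ
  refine ⟨q * N, fun u => ?_⟩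
  obtain ⟨i, hi, m, hm⟩ := hN u
  refine ⟨q * i, Nat.mul_le_mul_left q hi, m + i * round (q * α), ?_⟩
  have : u + ((q * i : ℕ) : ℝ) * α = u + i * δ + ((i * round (q * α) : ℤ) : ℝ) := by
    push_cast; ring
  rw [this]
  constructor <;> push_cast <;> linarith [hm.1, hm.2]

theorem irrational_logb_two_of_odd {p : ℕ} (hp : Odd p) (hp1 : 1 < p) :
    Irrational (logb p 2) := by
  rintro ⟨r, hr⟩
  have hp1' : (1 : ℝ) < p := by exact_mod_cast hp1
  have hnum : (0 : ℤ) ≤ r.num :=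
    Rat.num_nonneg.2 (by exact_mod_cast hr ▸ (logb_pos hp1' one_lt_two).le)
  have hpow : (p : ℝ) ^ r.num.toNat = 2 ^ r.den := by
    rw [← Real.rpow_natCast, ← Real.rpow_natCast (2 : ℝ), ← rpow_logb (b := p) (by positivity)
      (by linarith) two_pos, ← Real.rpow_mul (by positivity)]
    congr 1
    rw [show ((r.num.toNat : ℕ) : ℝ) = r.num by exact_mod_cast Int.toNat_of_nonneg hnum, ← hr]
    exact_mod_cast (Rat.mul_den_eq_num r).symm
  have h2 : 2 ∣ p ^ r.num.toNat := by
    rw [show p ^ r.num.toNat = 2 ^ r.den by exact_mod_cast hpow]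
    exact dvd_pow_self 2 r.den_nz
  exact hp.not_two_dvd_nat (Nat.prime_two.dvd_of_dvd_pow h2)

def IsGap (p : ℕ) (C t : ℝ) (x : ℕ) : Prop :=
  ∀ y : ℕ, ¬ (t ≤ (2 ^ x * p ^ y : ℕ) ∧ ((2 ^ x * p ^ y : ℕ) : ℝ) < C * t)

lemma isGap_of_logb_sub_mem_Ioo {p : ℕ} (hp1 : 1 < p) {C t : ℝ} (hC : 0 < C) (ht : 0 < t)
    {x : ℕ} {m : ℤ} (h : logb p t - x * logb p 2 ∈ Set.Ioo (m : ℝ) (m + (1 - logb p C))) :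
    IsGap p C t x := by
  rintro y ⟨hlo, hhi⟩
  have hb : (1 : ℝ) < p := by exact_mod_cast hp1
  have hlog : logb p ((2 ^ x * p ^ y : ℕ) : ℝ) = x * logb p 2 + y := by
    push_cast
    rw [logb_mul (by positivity) (by positivity), logb_pow, logb_pow, logb_self_eq_one hb, mul_one]
  have hpos : (0 : ℝ) < (2 ^ x * p ^ y : ℕ) := by positivity
  have hlo' := (logb_le_logb hb ht hpos).2 hlo
  have hhi' := (logb_lt_logb_iff hb hpos (by positivity)).2 hhi
  rw [hlog] at hlo' hhi'
  rw [logb_mul hC.ne' ht.ne'] at hhi'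
  have hmy : m < (y : ℤ) := by exact_mod_cast (show (m : ℝ) < y by linarith [h.1])
  have hym : (y : ℤ) < m + 1 := by exact_mod_cast (show (y : ℝ) < m + 1 by linarith [h.2])
  omega

theorem exists_isGap_in_every_block {p : ℕ} (hp : Odd p) (hp1 : 1 < p) {C : ℝ} (hC : 0 < C)
    (hCp : C < p) : ∃ K : ℕ, ∀ t : ℝ, 0 < t → ∀ x₀ : ℕ, ∃ x ∈ Ico x₀ (x₀ + K), IsGap p C t x := by
  have hb : (1 : ℝ) < p := by exact_mod_cast hp1
  have hℓ : 0 < 1 - logb p C := by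
    have := (logb_lt_logb_iff hb hC (by positivity)).2 hCp
    rw [logb_self_eq_one hb] at this
    linarith
  obtain ⟨N, hN⟩ := (irrational_logb_two_of_odd hp hp1).neg.exists_bound_add_mul_mem_Ioo_int hℓ
  refine ⟨N + 1, fun t ht x₀ => ?_⟩
  obtain ⟨n, hn, m, hm⟩ := hN (logb p t - x₀ * logb p 2)
  refine ⟨x₀ + n, mem_Ico.2 ⟨by omega, by omega⟩, isGap_of_logb_sub_mem_Ioo hp1 hC ht (m := m) ?_⟩
  convert hm using 1
  push_cast
  ring

lemma le_card_filter_range_mul {P : ℕ → Prop} [DecidablePred P] {K : ℕ}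
    (h : ∀ x₀, ∃ x ∈ Ico x₀ (x₀ + K), P x) (J : ℕ) : J ≤ #((range (K * J)).filter P) := by
  choose f hf hP using fun i => h (K * i)
  have hdiv : ∀ i, f i / K = i := fun i => by
    have := mem_Ico.1 (hf i)
    exact Nat.div_eq_of_lt_le (by linarith) (by rw [Nat.succ_mul]; linarith)
  calc J = #(range J) := (card_range J).symm
    _ ≤ _ := card_le_card_of_injOn f (fun i hi => by
        have := mem_Ico.1 (hf i)
        have : K * (i + 1) ≤ K * J := Nat.mul_le_mul_left K (mem_range.1 hi)
        exact mem_filter.2 ⟨mem_range.2 (by linarith), hP i⟩)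
      (fun a _ b _ hab => by rw [← hdiv a, ← hdiv b, hab])

noncomputable def window (p : ℕ) (C t : ℝ) (K : ℕ) : Finset (ℕ × ℕ) :=
  (range K ×ˢ range K).filter fun e =>
    t ≤ (2 ^ e.1 * p ^ e.2 : ℕ) ∧ ((2 ^ e.1 * p ^ e.2 : ℕ) : ℝ) < C * t

lemma window_injOn_fst {p : ℕ} (hp : 0 < p) {C t : ℝ} (hCp : C ≤ p) (ht : 0 < t) (K : ℕ) :
    Set.InjOn Prod.fst (window p C t K : Set (ℕ × ℕ)) := by
  have key : ∀ x y y', t ≤ (2 ^ x * p ^ y : ℕ) → ((2 ^ x * p ^ y' : ℕ) : ℝ) < C * t → y' ≤ y := by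
    intro x y y' hlo hhi
    by_contra! hyy
    have : (p : ℝ) ^ (y + 1) ≤ (p : ℝ) ^ y' := pow_le_pow_right₀ (by exact_mod_cast hp) hyy
    push_cast at hlo hhi
    have : (p : ℝ) * t < C * t := by
      calc (p : ℝ) * t ≤ 2 ^ x * p ^ (y + 1) := by rw [pow_succ]; nlinarith [hlo]
        _ ≤ 2 ^ x * p ^ y' := by gcongr
        _ < C * t := hhi
    nlinarith
  rintro ⟨x, y⟩ he ⟨x', y'⟩ he' (rfl : x = x')
  obtain ⟨-, hlo, hhi⟩ := mem_filter.1 he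
  obtain ⟨-, hlo', hhi'⟩ := mem_filter.1 he'
  exact Prod.ext rfl (le_antisymm (key _ _ _ hlo' hhi) (key _ _ _ hlo hhi'))

open Classical in
lemma card_window_le {p : ℕ} (hp : 0 < p) {C t : ℝ} (hCp : C ≤ p) (ht : 0 < t) (K : ℕ) :
    #(window p C t K) ≤ #((range K).filter fun x => ¬ IsGap p C t x) := by
  refine card_le_card_of_injOn Prod.fst (fun e he => ?_) (fun e he e' he' hx => ?_)
  · obtain ⟨hK, hwin⟩ := mem_filter.1 he
    exact mem_filter.2 ⟨(mem_product.1 hK).1, fun hgap => hgap e.2 hwin⟩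
  · exact window_injOn_fst hp hCp ht K he he' hx

lemma lt_of_two_pow_mul_pow_lt {p x y K : ℕ} (hp : 2 ≤ p) (h : 2 ^ x * p ^ y < 2 ^ K) :
    x < K ∧ y < K := by
  constructor
  · exact (Nat.pow_lt_pow_iff_right one_lt_two).1 <|
      (Nat.le_mul_of_pos_right _ (by positivity)).trans_lt h
  · refine (Nat.pow_lt_pow_iff_right one_lt_two).1 ?_
    calc 2 ^ y ≤ p ^ y := Nat.pow_le_pow_left hp y
      _ ≤ 2 ^ x * p ^ y := Nat.le_mul_of_pos_left _ (by positivity)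
      _ < 2 ^ K := h

noncomputable def compactReps (p : ℕ) (C : ℝ) (K : ℕ) : Finset (Finset ℕ) :=
  ((range K ×ˢ range K).image fun e => 2 ^ e.1 * p ^ e.2).biUnion fun m : ℕ =>
    ((window p C m K).image fun e => (2 ^ e.1 * p ^ e.2 : ℕ)).powerset

lemma mem_compactReps {p : ℕ} (hp : 2 ≤ p) {C : ℝ} {K : ℕ} {B : Finset ℕ} (hB : B.Nonempty)
    (hA : ∀ b ∈ B, ∃ x y : ℕ, b = 2 ^ x * p ^ y) (hsum : ∑ b ∈ B, b < 2 ^ K)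
    (hC : ∀ b ∈ B, (b : ℝ) < C * (B.min' hB : ℝ)) : B ∈ compactReps p C K := by
  have hexp : ∀ b ∈ B, ∃ e ∈ range K ×ˢ range K, 2 ^ e.1 * p ^ e.2 = b := by
    intro b hb
    obtain ⟨x, y, rfl⟩ := hA b hb
    have := lt_of_two_pow_mul_pow_lt hp
      ((single_le_sum (fun _ _ => Nat.zero_le _) hb).trans_lt hsum)
    exact ⟨(x, y), mem_product.2 ⟨mem_range.2 this.1, mem_range.2 this.2⟩, rfl⟩
  refine mem_biUnion.2 ⟨B.min' hB, mem_image.2 (hexp _ (B.min'_mem hB)), mem_powerset.2 ?_⟩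
  intro b hb
  obtain ⟨e, he, rfl⟩ := hexp b hb
  exact mem_image.2 ⟨e, mem_filter.2 ⟨he, by exact_mod_cast B.min'_le _ hb, hC _ hb⟩, rfl⟩

open Classical in
lemma card_compactReps_le {p : ℕ} (hp : 0 < p) {C : ℝ} (hCp : C ≤ p) {K J : ℕ}
    (hgap : ∀ t : ℝ, 0 < t → J ≤ #((range K).filter (IsGap p C t))) :
    #(compactReps p C K) ≤ K ^ 2 * 2 ^ (K - J) := by
  calc #(compactReps p C K)
      ≤ ∑ m ∈ (range K ×ˢ range K).image (fun e => 2 ^ e.1 * p ^ e.2), 2 ^ (K - J) := by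
        refine card_biUnion_le.trans (sum_le_sum fun m hm => ?_)
        obtain ⟨e, -, rfl⟩ := mem_image.1 hm
        have hm : (0 : ℝ) < (2 ^ e.1 * p ^ e.2 : ℕ) := by positivity
        have := card_filter_add_card_filter_not (s := range K) (IsGap p C (2 ^ e.1 * p ^ e.2 : ℕ))
        rw [card_powerset, card_range] at *
        gcongr
        · norm_num
        · have := hgap _ hm
          exact card_image_le.trans ((card_window_le hp hCp hm K).trans (by omega))
    _ ≤ K ^ 2 * 2 ^ (K - J) := by
        rw [sum_const, smul_eq_mul]
        exact Nat.mul_le_mul_right _ (card_image_le.trans (by simp [sq]))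

lemma exists_two_mul_sq_lt_two_pow (a : ℕ) : ∃ J : ℕ, 0 < J ∧ 2 * (a * J) ^ 2 < 2 ^ J := by
  refine ⟨32 * (a + 1), by positivity, ?_⟩
  have ha : a + 1 ≤ 2 ^ a := Nat.lt_two_pow_self
  calc 2 * (a * (32 * (a + 1))) ^ 2 ≤ 2 ^ 11 * (a + 1) ^ 4 := by
        have : a ≤ a + 1 := by omega
        nlinarith [pow_le_pow_left₀ (Nat.zero_le _) this 2]
    _ ≤ 2 ^ 11 * (2 ^ a) ^ 4 := by gcongr
    _ < 2 ^ (32 * (a + 1)) := by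
        rw [← pow_mul, ← pow_add]
        exact Nat.pow_lt_pow_right (by norm_num) (by omega)

theorem Ap_lower_bound (p : ℕ) (hp : Odd p) (hp1 : 1 < p)
    (C : ℝ) (hC1 : 1 < C) (hCp : C < p) :
    ∃ n : ℕ, 0 < n ∧
      ¬ ∃ B : Finset ℕ, ∃ hB : B.Nonempty,
          (∀ b ∈ B, ∃ x y : ℕ, b = 2 ^ x * p ^ y) ∧
          (∑ b ∈ B, b) = n ∧
          (∀ b ∈ B, (b : ℝ) < C * (B.min' hB : ℝ)) := by
  classical
  by_contra! hrep
  obtain ⟨K₀, hblock⟩ := exists_isGap_in_every_block hp hp1 (by linarith) hCp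
  obtain ⟨J, hJ, hJ2⟩ := exists_two_mul_sq_lt_two_pow K₀
  set K := K₀ * J
  have hgap : ∀ t : ℝ, 0 < t → J ≤ #((range K).filter (IsGap p C t)) :=
    fun t ht => le_card_filter_range_mul (hblock t ht) J
  have hJK : J ≤ K := (hgap 1 one_pos).trans ((card_filter_le _ _).trans (card_range K).le)
  have hcover : Ico 1 (2 ^ K) ⊆ (compactReps p C K).image fun B => ∑ b ∈ B, b := by
    intro n hn
    obtain ⟨B, hB, hA, hsum, hC⟩ := hrep n (mem_Ico.1 hn).1
    exact mem_image.2 ⟨B, mem_compactReps hp1 hB hA (hsum ▸ (mem_Ico.1 hn).2) hC, hsum⟩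
  have hcount : 2 ^ K - 1 ≤ K ^ 2 * 2 ^ (K - J) := by
    simpa using (card_le_card hcover).trans
      (card_image_le.trans (card_compactReps_le (by omega) hCp.le hgap))
  have hsmall : 2 * (K ^ 2 * 2 ^ (K - J)) < 2 ^ K := by
    calc 2 * (K ^ 2 * 2 ^ (K - J)) = 2 * K ^ 2 * 2 ^ (K - J) := by ring
      _ < 2 ^ J * 2 ^ (K - J) := by gcongr
      _ = 2 ^ K := by rw [← pow_add, Nat.add_sub_cancel' hJK]
  have hK : 0 < K := by omega
  have : 0 < K ^ 2 * 2 ^ (K - J) := by positivity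
  omega
end

section
/- For every odd integer p > 1, there exists a finite set S of integers of the form 2^x·p^y, each greater than 1, and a positive integer M₀ ≤ p, such that every integer x with M₀ ≤ x ≤ M₀ + |S| is a sum of distinct elements of S, |S| ≤ 1 + ⌈log₂ p⌉, and p ≤ max S ≤ 2^⌈log₂ p⌉. -/
/-!
Take `S = {p, 2, 4, …, 2^k}` with `k = ⌈log₂ p⌉` and `M₀ = p - 1`. By binary expansion every even
number below `2^(k+1)` is a sum of distinct elements of `{2, 4, …, 2^k}`; an odd `x ≥ p` is `p`
plus such an even number. Since `p + k ≤ 2^k + k < 2^(k+1)`, this covers `[p - 1, p + k]`.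
-/

open Finset

def twoPows (k : ℕ) : Finset ℕ :=
  (range k).image fun i => 2 ^ (i + 1)

lemma mem_twoPows {k n : ℕ} : n ∈ twoPows k ↔ ∃ i < k, 2 ^ (i + 1) = n := by
  simp [twoPows]

lemma card_twoPows (k : ℕ) : (twoPows k).card = k := by
  rw [twoPows, card_image_of_injective _ fun a b h => by
    simpa using Nat.pow_right_injective le_rfl h, card_range]

lemma even_of_mem_twoPows {k n : ℕ} (hn : n ∈ twoPows k) : Even n := by
  obtain ⟨i, -, rfl⟩ := mem_twoPows.1 hn
  exact (Nat.even_pow' i.succ_ne_zero).2 even_two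

lemma exists_subset_twoPows_sum_eq_two_mul {k m : ℕ} (hm : m < 2 ^ k) :
    ∃ T ⊆ twoPows k, ∑ t ∈ T, t = 2 * m := by
  refine ⟨m.bitIndices.toFinset.image fun i => 2 ^ (i + 1), ?_, ?_⟩
  · refine image_subset_image fun i hi => mem_range.2 ?_
    have := Nat.two_pow_le_of_mem_bitIndices (List.mem_toFinset.1 hi)
    exact (Nat.pow_lt_pow_iff_right (by norm_num)).1 (this.trans_lt hm)
  · rw [sum_image fun a _ b _ h => by simpa using Nat.pow_right_injective le_rfl h]
    simp_rw [pow_succ, ← sum_mul, sum_toFinset_bitIndices_two_pow, mul_comm]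

lemma exists_subset_insert_twoPows_sum_eq {q k x : ℕ} (hq : Odd q) (hx : x < 2 ^ (k + 1))
    (hqx : Even x ∨ q ≤ x) : ∃ T ⊆ insert q (twoPows k), ∑ t ∈ T, t = x := by
  rcases Nat.even_or_odd x with ⟨m, rfl⟩ | hx_odd
  · obtain ⟨T, hT, hsum⟩ := exists_subset_twoPows_sum_eq_two_mul (k := k) (m := m) (by omega)
    exact ⟨T, hT.trans (subset_insert _ _), by omega⟩
  · have hq_le : q ≤ x := hqx.resolve_left (Nat.not_even_iff_odd.2 hx_odd)
    obtain ⟨m, hm⟩ : Even (x - q) := Nat.Odd.sub_odd hx_odd hq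
    obtain ⟨T, hT, hsum⟩ := exists_subset_twoPows_sum_eq_two_mul (k := k) (m := m) (by omega)
    have hqT : q ∉ T := fun h => Nat.not_even_iff_odd.2 hq (even_of_mem_twoPows (hT h))
    exact ⟨insert q T, insert_subset_insert q hT, by rw [sum_insert hqT, hsum]; omega⟩

theorem exists_good_set (p : ℕ) (hp : Odd p) (hp1 : 1 < p) :
    ∃ S : Finset ℕ, ∃ hS : S.Nonempty, ∃ M₀ : ℕ,
      (∀ s ∈ S, (∃ x y : ℕ, s = 2 ^ x * p ^ y) ∧ 1 < s) ∧
      0 < M₀ ∧ M₀ ≤ p ∧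
      (∀ x : ℕ, M₀ ≤ x → x ≤ M₀ + S.card → ∃ T ⊆ S, (∑ t ∈ T, t) = x) ∧
      S.card ≤ 1 + Nat.clog 2 p ∧
      p ≤ S.max' hS ∧ S.max' hS ≤ 2 ^ (Nat.clog 2 p) := by
  set k := Nat.clog 2 p
  have hpk : p ≤ 2 ^ k := Nat.le_pow_clog one_lt_two p
  have hk : k < 2 ^ k := Nat.lt_two_pow_self
  have hp_notMem : p ∉ twoPows k := fun h => Nat.not_even_iff_odd.2 hp (even_of_mem_twoPows h)
  have hcard : (insert p (twoPows k)).card = k + 1 := by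
    rw [card_insert_of_notMem hp_notMem, card_twoPows]
  refine ⟨insert p (twoPows k), insert_nonempty _ _, p - 1, ?_, by omega, by omega, ?_,
    by omega, le_max' _ p (mem_insert_self _ _), max'_le _ _ _ ?_⟩
  · simp only [mem_insert, mem_twoPows]
    rintro s (rfl | ⟨i, -, rfl⟩)
    · exact ⟨⟨0, 1, by simp⟩, hp1⟩
    · exact ⟨⟨i + 1, 0, by simp⟩, Nat.one_lt_two_pow i.succ_ne_zero⟩
  · intro x hx₁ hx₂
    have hx_lt : x < 2 ^ (k + 1) := by rw [pow_succ]; omega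
    refine exists_subset_insert_twoPows_sum_eq hp hx_lt ((Nat.even_or_odd x).imp_right fun hx => ?_)
    obtain ⟨u, rfl⟩ := hp
    obtain ⟨v, rfl⟩ := hx
    omega
  · simp only [mem_insert, mem_twoPows]
    rintro s (rfl | ⟨i, hi, rfl⟩)
    exacts [hpk, Nat.pow_le_pow_right two_pos hi]
end
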